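/- arXiv:2305.16258 — 4 statements merged into one kernel-verified Lean document; each statement's English description precedes it below -/
import Mathlib

section
/- Every finite simple C4-free graph G satisfies χ̄(G) ≤ binomial(α(G)+1, 2), where χ̄ is the clique cover number and α the independence number. -/
open SimpleGraph

namespace Paper

variable {V : Type*}

/-- `G` contains an induced subgraph isomorphic to `H`. -/
def ContainsInduced {W : Type*} (G : SimpleGraph V) (H : SimpleGraph W) : Prop :=
  ∃ S : Set V, Nonempty (G.induce S ≃g H)

/-- `G` is `H`-free: no induced subgraph of `G` is isomorphic to `H`. -/
def Free {W : Type*} (G : SimpleGraph V) (H : SimpleGraph W) : Prop :=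
  ¬ ContainsInduced G H

/-- The diamond: `K₄` minus an edge. -/
def diamond : SimpleGraph (Fin 4) :=
  (⊤ : SimpleGraph (Fin 4)).deleteEdges {s(0, 1)}

/-- `S` induces a hole (an induced cycle of length at least 4) in `G`. -/
def IsHoleSet (G : SimpleGraph V) (S : Set V) : Prop :=
  ∃ n : ℕ, 4 ≤ n ∧ Nonempty (G.induce S ≃g cycleGraph n)

/-- `G` contains an even hole. -/
def HasEvenHole (G : SimpleGraph V) : Prop :=
  ∃ S : Set V, ∃ n : ℕ, 4 ≤ n ∧ Even n ∧ Nonempty (G.induce S ≃g cycleGraph n)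

/-- The union of the vertex sets of two walks induces a hole in `G`. -/
def PairHole (G : SimpleGraph V) {a b c d : V} (P : G.Walk a b) (Q : G.Walk c d) : Prop :=
  IsHoleSet G {v | v ∈ P.support ∨ v ∈ Q.support}

/-- `G` contains a theta. -/
def HasTheta (G : SimpleGraph V) : Prop :=
  ∃ (a b : V) (P₁ P₂ P₃ : G.Walk a b),
    a ≠ b ∧ ¬ G.Adj a b ∧
    P₁.IsPath ∧ P₂.IsPath ∧ P₃.IsPath ∧
    PairHole G P₁ P₂ ∧ PairHole G P₁ P₃ ∧ PairHole G P₂ P₃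

/-- `G` contains a pyramid. -/
def HasPyramid (G : SimpleGraph V) : Prop :=
  ∃ (a b₁ b₂ b₃ : V) (P₁ : G.Walk a b₁) (P₂ : G.Walk a b₂) (P₃ : G.Walk a b₃),
    G.Adj b₁ b₂ ∧ G.Adj b₁ b₃ ∧ G.Adj b₂ b₃ ∧
    a ≠ b₁ ∧ a ≠ b₂ ∧ a ≠ b₃ ∧
    P₁.IsPath ∧ P₂.IsPath ∧ P₃.IsPath ∧
    PairHole G P₁ P₂ ∧ PairHole G P₁ P₃ ∧ PairHole G P₂ P₃

/-- `G` contains a prism. -/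
def HasPrism (G : SimpleGraph V) : Prop :=
  ∃ (a₁ a₂ a₃ b₁ b₂ b₃ : V) (P₁ : G.Walk a₁ b₁) (P₂ : G.Walk a₂ b₂) (P₃ : G.Walk a₃ b₃),
    G.Adj a₁ a₂ ∧ G.Adj a₁ a₃ ∧ G.Adj a₂ a₃ ∧
    G.Adj b₁ b₂ ∧ G.Adj b₁ b₃ ∧ G.Adj b₂ b₃ ∧
    ({a₁, a₂, a₃} : Set V) ∩ {b₁, b₂, b₃} = ∅ ∧
    P₁.IsPath ∧ P₂.IsPath ∧ P₃.IsPath ∧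
    PairHole G P₁ P₂ ∧ PairHole G P₁ P₃ ∧ PairHole G P₂ P₃

/-- The neighbors of `v` inside the set `S`. -/
def nbrsIn (G : SimpleGraph V) (S : Set V) (v : V) : Set V :=
  {u | u ∈ S ∧ G.Adj v u}

/-- `(S, v)` is a wheel of `G`: `S` is a hole and `v ∉ S` has at least 3 neighbors in `S`. -/
def IsWheel (G : SimpleGraph V) (S : Set V) (v : V) : Prop :=
  IsHoleSet G S ∧ v ∉ S ∧ 3 ≤ (nbrsIn G S v).ncard

/-- `(S, v)` is an even wheel of `G`. -/
def IsEvenWheel (G : SimpleGraph V) (S : Set V) (v : V) : Prop :=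
  IsWheel G S v ∧ Even (nbrsIn G S v).ncard

def HasWheel (G : SimpleGraph V) : Prop := ∃ (S : Set V) (v : V), IsWheel G S v

def HasEvenWheel (G : SimpleGraph V) : Prop := ∃ (S : Set V) (v : V), IsEvenWheel G S v

/-- A bug: a wheel whose hub has exactly three neighbors in the hole,
exactly two of which are adjacent. -/
def IsBug (G : SimpleGraph V) (S : Set V) (v : V) : Prop :=
  IsWheel G S v ∧ ∃ x y z : V, x ≠ y ∧ x ≠ z ∧ y ≠ z ∧
    nbrsIn G S v = {x, y, z} ∧ G.Adj x y ∧ ¬ G.Adj x z ∧ ¬ G.Adj y z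

/-- A twin wheel: the neighbors of the hub in the hole induce a path of length two. -/
def IsTwinWheel (G : SimpleGraph V) (S : Set V) (v : V) : Prop :=
  IsWheel G S v ∧ ∃ x y z : V, x ≠ y ∧ x ≠ z ∧ y ≠ z ∧
    nbrsIn G S v = {x, y, z} ∧ G.Adj x y ∧ G.Adj y z ∧ ¬ G.Adj x z

/-- A universal wheel: the hub is adjacent to every vertex of the hole. -/
def IsUniversalWheel (G : SimpleGraph V) (S : Set V) (v : V) : Prop :=
  IsWheel G S v ∧ ∀ u ∈ S, G.Adj v u

/-- `G` is a member of the class 𝒞 of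
(C4, diamond, theta, pyramid, prism, even wheel)-free graphs. -/
def InC (G : SimpleGraph V) : Prop :=
  Free G (cycleGraph 4) ∧ Free G diamond ∧ ¬ HasTheta G ∧ ¬ HasPyramid G ∧
    ¬ HasPrism G ∧ ¬ HasEvenWheel G

/-- The independence number of `G`. -/
noncomputable def indepNum (G : SimpleGraph V) : ℕ :=
  sSup {n | ∃ S : Set V, (S.Pairwise fun u v => ¬ G.Adj u v) ∧ S.ncard = n}

/-- The clique number of `G`. -/
noncomputable def cliqueNum (G : SimpleGraph V) : ℕ :=
  sSup {n | ∃ S : Set V, G.IsClique S ∧ S.ncard = n}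

/-- The (vertex) clique cover number of `G`: the minimum number of parts in a
partition of the vertex set of `G` into cliques. -/
noncomputable def cliqueCoverNum (G : SimpleGraph V) : ℕ :=
  sInf {n | ∃ F : Finset (Set V), F.card = n ∧ (∀ C ∈ F, G.IsClique C) ∧
    ∀ v : V, ∃! C : Set V, C ∈ F ∧ v ∈ C}

/-- A tree decomposition of `G`. -/
structure TreeDecomp (G : SimpleGraph V) where
  ι : Type
  tree : SimpleGraph ι
  tree_acyclic : tree.IsAcyclic
  tree_connected : tree.Connected
  bag : ι → Set V
  bag_cover : ∀ v : V, ∃ t, v ∈ bag t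
  bag_edge : ∀ ⦃u v : V⦄, G.Adj u v → ∃ t, u ∈ bag t ∧ v ∈ bag t
  bag_subtree : ∀ v : V, (tree.induce {t | v ∈ bag t}).Connected

/-- The treewidth of `G`: the minimum over tree decompositions of (max bag size − 1). -/
noncomputable def treewidth (G : SimpleGraph V) : ℕ :=
  sInf {k | ∃ D : TreeDecomp G, ∀ t, (D.bag t).ncard ≤ k + 1}

/-- The tree independence number of `G`. -/
noncomputable def treeIndepNum (G : SimpleGraph V) : ℕ :=
  sInf {k | ∃ D : TreeDecomp G, ∀ t, indepNum (G.induce (D.bag t)) ≤ k}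

/-- The tree clique cover number of `G`. -/
noncomputable def treeCliqueCoverNum (G : SimpleGraph V) : ℕ :=
  sInf {k | ∃ D : TreeDecomp G, ∀ t, cliqueCoverNum (G.induce (D.bag t)) ≤ k}

/-- A weight function on a finite graph: values in `[0,1]` summing to `1`. -/
def IsWeightFn [Fintype V] (w : V → ℝ) : Prop :=
  (∀ v, 0 ≤ w v ∧ w v ≤ 1) ∧ ∑ v, w v = 1

/-- The weight of a set of vertices. -/
noncomputable def wSet (w : V → ℝ) (S : Set V) : ℝ := ∑ᶠ x ∈ S, w x

/-- `X` is a `(w, c)`-balanced separator of `G`: every connected component of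
`G − X` has weight at most `c`. -/
def IsBalancedSep (G : SimpleGraph V) (w : V → ℝ) (c : ℝ) (X : Set V) : Prop :=
  ∀ D : (G.induce Xᶜ).ConnectedComponent, wSet w (Subtype.val '' D.supp) ≤ c

/-- `G` has a clique cutset: a clique `C` such that `G − C` is disconnected. -/
def HasCliqueCutset (G : SimpleGraph V) : Prop :=
  ∃ C : Set V, G.IsClique C ∧ ¬ (G.induce Cᶜ).Preconnected

/-- The closed neighborhood of `v`. -/
def closedNbhd (G : SimpleGraph V) (v : V) : Set V := insert v (G.neighborSet v)

/-- The (open) neighborhood of a set `S`: vertices outside `S` with a neighbor in `S`. -/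
def setNbhd (G : SimpleGraph V) (S : Set V) : Set V :=
  {v | v ∉ S ∧ ∃ u ∈ S, G.Adj v u}

/-- `(A, C, B)` is a separation of `G`. -/
def IsSeparation (G : SimpleGraph V) (A C B : Set V) : Prop :=
  A ∪ C ∪ B = Set.univ ∧ Disjoint A C ∧ Disjoint A B ∧ Disjoint C B ∧
    ∀ a ∈ A, ∀ b ∈ B, ¬ G.Adj a b

/-- `v` is a balanced vertex with respect to `w`: every connected component of
`G − N[v]` has weight at most `1/2`. -/
def IsBalancedVtx (G : SimpleGraph V) (w : V → ℝ) (v : V) : Prop :=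
  ∀ D : (G.induce (closedNbhd G v)ᶜ).ConnectedComponent,
    wSet w (Subtype.val '' D.supp) ≤ 1 / 2


lemma c4_of_config (G : SimpleGraph V) (h : Free G (cycleGraph 4))
    {u v x y : V} (huv : u ≠ v) (hxy : x ≠ y)
    (nuv : ¬ G.Adj u v) (nxy : ¬ G.Adj x y)
    (hux : G.Adj u x) (hxv : G.Adj x v) (hvy : G.Adj v y) (hyu : G.Adj y u) : False := by
  classical
  apply h
  refine ⟨{u, x, v, y}, ⟨?_⟩⟩
  have hu : u ∈ ({u, x, v, y} : Set V) := by simp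
  have hx : x ∈ ({u, x, v, y} : Set V) := by simp
  have hv : v ∈ ({u, x, v, y} : Set V) := by simp
  have hy : y ∈ ({u, x, v, y} : Set V) := by simp
  have hux' : u ≠ x := G.ne_of_adj hux
  have hxv' : x ≠ v := G.ne_of_adj hxv
  have hvy' : v ≠ y := G.ne_of_adj hvy
  have hyu' : y ≠ u := G.ne_of_adj hyu
  let φ : Fin 4 → ({u, x, v, y} : Set V) := ![⟨u, hu⟩, ⟨x, hx⟩, ⟨v, hv⟩, ⟨y, hy⟩]
  have hφbij : Function.Bijective φ := by
    constructor
    · intro i j hij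
      fin_cases i <;> fin_cases j <;> simp_all [φ, Subtype.ext_iff]
    · rintro ⟨w, hw⟩
      simp only [Set.mem_insert_iff, Set.mem_singleton_iff] at hw
      rcases hw with rfl | rfl | rfl | rfl
      exacts [⟨0, rfl⟩, ⟨1, rfl⟩, ⟨2, rfl⟩, ⟨3, rfl⟩]
  have key : ∀ i j : Fin 4, ((cycleGraph 4).Adj i j) ↔ (G.induce {u, x, v, y}).Adj (φ i) (φ j) := by
    intro i j
    fin_cases i <;> fin_cases j <;>
      simp [φ, comap_adj, cycleGraph_adj] <;>
      first
        | decide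
        | (first | exact hux | exact hux.symm | exact hxv | exact hxv.symm
                 | exact hvy | exact hvy.symm | exact hyu | exact hyu.symm)
        | (intro hc; first | exact nuv hc | exact nuv hc.symm | exact nxy hc | exact nxy hc.symm)
        | (exact iff_of_false (by decide)
            (by first | exact nuv | exact fun hc => nuv hc.symm | exact nxy | exact fun hc => nxy hc.symm))
        | (exact iff_of_true (by decide)
            (by first | exact hux | exact hux.symm | exact hxv | exact hxv.symm
                      | exact hvy | exact hvy.symm | exact hyu | exact hyu.symm))
  let e : Fin 4 ≃ ({u, x, v, y} : Set V) := Equiv.ofBijective φ hφbij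
  exact ⟨e.symm, by
    intro a b
    rw [key (e.symm a) (e.symm b)]
    have hc : ∀ c, (φ (e.symm c) : V) = (c : V) := fun c => congrArg Subtype.val (e.apply_symm_apply c)
    simp [comap_adj, hc]⟩

section Aux3
open scoped Classical
variable [Fintype V] (G : SimpleGraph V) (S : Set V)

noncomputable def auxNB (x : V) : Finset V :=
  Set.Finite.toFinset (Set.toFinite {w | w ∈ S ∧ G.Adj x w})

lemma mem_auxNB {x w : V} : w ∈ auxNB G S x ↔ w ∈ S ∧ G.Adj x w := by
  simp [auxNB]

noncomputable def auxRep (x : V) : V :=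
  if h : ∃ v, auxNB G S x = {v} then h.choose else x

lemma auxRep_spec {x : V} (h : (auxNB G S x).card = 1) :
    auxNB G S x = {auxRep G S x} := by
  obtain h' := Finset.card_eq_one.mp h
  rw [auxRep, dif_pos h']
  exact h'.choose_spec

noncomputable def auxPr (x : V) : Finset V :=
  if h : 2 ≤ (auxNB G S x).card then (Finset.exists_subset_card_eq h).choose else ∅

lemma auxPr_spec {x : V} (h : 2 ≤ (auxNB G S x).card) :
    auxPr G S x ⊆ auxNB G S x ∧ (auxPr G S x).card = 2 := by
  rw [auxPr, dif_pos h]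
  exact (Finset.exists_subset_card_eq h).choose_spec

noncomputable def auxPv (v : V) : Set V := {v} ∪ {x | x ∉ S ∧ auxNB G S x = {v}}

noncomputable def auxQp (T : Finset V) : Set V :=
  {x | x ∉ S ∧ 2 ≤ (auxNB G S x).card ∧ auxPr G S x = T}

noncomputable def auxF (x : V) : Set V :=
  if x ∈ S then auxPv G S x
  else if (auxNB G S x).card = 1 then auxPv G S (auxRep G S x)
  else auxQp G S (auxPr G S x)

end Aux3

theorem statement3 {V : Type} [Fintype V] (G : SimpleGraph V)
    (h : Free G (cycleGraph 4)) :
    cliqueCoverNum G ≤ (indepNum G + 1).choose 2 := by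
  classical
  set a := indepNum G with ha
  have hsymm : Symmetric (fun u v : V => ¬ G.Adj u v) := fun u v hn h2 => hn h2.symm
  have hbdd : BddAbove {n | ∃ S : Set V, (S.Pairwise fun u v => ¬ G.Adj u v) ∧ S.ncard = n} := by
    refine ⟨Fintype.card V, ?_⟩
    rintro n ⟨S, -, rfl⟩
    simpa [Set.ncard_univ, Nat.card_eq_fintype_card] using
      Set.ncard_le_ncard (Set.subset_univ S) Set.finite_univ
  have hne : {n | ∃ S : Set V, (S.Pairwise fun u v => ¬ G.Adj u v) ∧ S.ncard = n}.Nonempty :=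
    ⟨0, ∅, by simp, by simp⟩
  have hmem : ∃ S : Set V, (S.Pairwise fun u v => ¬ G.Adj u v) ∧ S.ncard = a := by
    rw [ha, indepNum]; exact Nat.sSup_mem hne hbdd
  obtain ⟨S, hSst, hScard⟩ := hmem
  have hmax : ∀ T : Set V, (T.Pairwise fun u v => ¬ G.Adj u v) → T.ncard ≤ a :=
    fun T hT => le_csSup hbdd ⟨T, hT, rfl⟩
  -- every vertex outside S has a neighbor in S
  have hM1 : ∀ x, x ∉ S → (auxNB G S x).Nonempty := by
    intro x hx
    rw [Finset.nonempty_iff_ne_empty]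
    intro hemp
    have hnon : ∀ w ∈ S, ¬ G.Adj x w := by
      intro w hw hadj
      have : w ∈ auxNB G S x := (mem_auxNB G S).mpr ⟨hw, hadj⟩
      simp [hemp] at this
    have hT : (insert x S).Pairwise (fun u v => ¬ G.Adj u v) := by
      rw [@Set.pairwise_insert_of_symm _ (fun u v => ¬ G.Adj u v) _ _ ⟨fun _ _ h => hsymm h⟩]
      exact ⟨hSst, fun b hb _ => hnon b hb⟩
    have := hmax _ hT
    rw [Set.ncard_insert_of_notMem hx (Set.toFinite S), hScard] at this
    omega
  -- vertices with the same unique neighbor in S are adjacent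
  have hPV : ∀ v ∈ S, ∀ x y : V, x ∉ S → y ∉ S → auxNB G S x = {v} → auxNB G S y = {v} →
      x ≠ y → G.Adj x y := by
    intro v hv x y hx hy hNx hNy hne'
    by_contra hadj
    have hxn : ∀ w ∈ S, w ≠ v → ¬ G.Adj x w := by
      intro w hw hwv hadj'
      have : w ∈ auxNB G S x := (mem_auxNB G S).mpr ⟨hw, hadj'⟩
      rw [hNx, Finset.mem_singleton] at this
      exact hwv this
    have hyn : ∀ w ∈ S, w ≠ v → ¬ G.Adj y w := by
      intro w hw hwv hadj'
      have : w ∈ auxNB G S y := (mem_auxNB G S).mpr ⟨hw, hadj'⟩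
      rw [hNy, Finset.mem_singleton] at this
      exact hwv this
    have hyd : y ∉ S \ {v} := fun hc => hy hc.1
    have hxd : x ∉ insert y (S \ {v}) := by
      intro hc
      rcases hc with hc | hc
      · exact hne' hc
      · exact hx hc.1
    have hT : (insert x (insert y (S \ {v}))).Pairwise (fun u w => ¬ G.Adj u w) := by
      rw [@Set.pairwise_insert_of_symm _ (fun u v => ¬ G.Adj u v) _ _ ⟨fun _ _ h => hsymm h⟩]
      constructor
      · rw [@Set.pairwise_insert_of_symm _ (fun u v => ¬ G.Adj u v) _ _ ⟨fun _ _ h => hsymm h⟩]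
        refine ⟨hSst.mono Set.diff_subset, fun b hb _ => hyn b hb.1 hb.2⟩
      · intro b hb _
        rcases hb with hb | hb
        · subst hb; exact hadj
        · exact hxn b hb.1 hb.2
    have hcard : (insert x (insert y (S \ {v}))).ncard = (a - 1) + 2 := by
      rw [Set.ncard_insert_of_notMem hxd (by
        exact Set.Finite.insert y ((Set.toFinite S).diff)),
        Set.ncard_insert_of_notMem hyd ((Set.toFinite S).diff),
        Set.ncard_diff_singleton_of_mem hv, hScard]
    have hapos : 1 ≤ a := by
      have := hmax {v} (Set.pairwise_singleton _ _)
      have h1 : ({v} : Set V).ncard = 1 := Set.ncard_singleton v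
      -- we need a ≥ 1 from v ∈ S
      have := Set.ncard_le_ncard (Set.singleton_subset_iff.mpr hv) (Set.toFinite S)
      omega
    have := hmax _ hT
    rw [hcard] at this
    omega
  -- membership in own part
  have memf : ∀ x, x ∈ auxF G S x := by
    intro x
    by_cases hx : x ∈ S
    · rw [auxF, if_pos hx]; left; rfl
    · rw [auxF, if_neg hx]
      by_cases h1 : (auxNB G S x).card = 1
      · rw [if_pos h1]
        exact Or.inr ⟨hx, auxRep_spec G S h1⟩
      · rw [if_neg h1]
        have hpos : 0 < (auxNB G S x).card := Finset.card_pos.mpr (hM1 x hx)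
        exact ⟨hx, by omega, rfl⟩
  -- part coherence
  have pv_elim : ∀ v ∈ S, ∀ y, y ∈ auxPv G S v → auxF G S y = auxPv G S v := by
    intro v hv y hy
    rcases hy with hy | hy
    · rcases hy with rfl
      rw [auxF, if_pos hv]
    · obtain ⟨hyS, hNy⟩ := hy
      have h1 : (auxNB G S y).card = 1 := by rw [hNy]; simp
      rw [auxF, if_neg hyS, if_pos h1]
      have : auxRep G S y = v := by
        have := auxRep_spec G S h1
        rw [hNy] at this
        exact (Finset.singleton_inj.mp this.symm)
      rw [this]
  have qp_elim : ∀ T, ∀ y, y ∈ auxQp G S T → auxF G S y = auxQp G S T := by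
    intro T y hy
    obtain ⟨hyS, h2, hpr⟩ := hy
    rw [auxF, if_neg hyS, if_neg (by omega), hpr]
  have eqf : ∀ x y, y ∈ auxF G S x → auxF G S y = auxF G S x := by
    intro x y hy
    by_cases hx : x ∈ S
    · have hx' : auxF G S x = auxPv G S x := by rw [auxF, if_pos hx]
      rw [hx'] at hy ⊢
      exact pv_elim x hx y hy
    · by_cases h1 : (auxNB G S x).card = 1
      · have hx' : auxF G S x = auxPv G S (auxRep G S x) := by
          rw [auxF, if_neg hx, if_pos h1]
        rw [hx'] at hy ⊢
        have hrv : auxRep G S x ∈ S := by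
          have h2 := auxRep_spec G S h1
          have hmem : auxRep G S x ∈ auxNB G S x := by rw [h2]; simp
          exact ((mem_auxNB G S).mp hmem).1
        exact pv_elim _ hrv y hy
      · have hx' : auxF G S x = auxQp G S (auxPr G S x) := by
          rw [auxF, if_neg hx, if_neg h1]
        rw [hx'] at hy ⊢
        exact qp_elim _ y hy
  -- cliques
  have cliq_pv : ∀ v ∈ S, G.IsClique (auxPv G S v) := by
    intro v hv p hp q hq hpq
    rcases hp with hp | hp <;> rcases hq with hq | hq
    · exact absurd (hp.trans hq.symm) hpq
    · rcases hp with rfl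
      have : p ∈ auxNB G S q := by rw [hq.2]; simp
      exact ((mem_auxNB G S).mp this).2.symm
    · rcases hq with rfl
      have : q ∈ auxNB G S p := by rw [hp.2]; simp
      exact ((mem_auxNB G S).mp this).2
    · exact hPV v hv p q hp.1 hq.1 hp.2 hq.2 hpq
  have cliq_qp : ∀ T, G.IsClique (auxQp G S T) := by
    intro T p hp q hq hpq
    obtain ⟨hpS, hp2, hpT⟩ := hp
    obtain ⟨hqS, hq2, hqT⟩ := hq
    obtain ⟨hsub, hcard2⟩ := auxPr_spec G S hp2
    obtain ⟨hsubq, -⟩ := auxPr_spec G S hq2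
    rw [hpT] at hsub hcard2
    rw [hqT] at hsubq
    obtain ⟨u, w, huw, hT⟩ := Finset.card_eq_two.mp hcard2
    have huN : u ∈ auxNB G S p := hsub (by rw [hT]; simp)
    have hwN : w ∈ auxNB G S p := hsub (by rw [hT]; simp)
    have huNq : u ∈ auxNB G S q := hsubq (by rw [hT]; simp)
    have hwNq : w ∈ auxNB G S q := hsubq (by rw [hT]; simp)
    obtain ⟨huS, hpu⟩ := (mem_auxNB G S).mp huN
    obtain ⟨hwS, hpw⟩ := (mem_auxNB G S).mp hwN
    obtain ⟨-, hqu⟩ := (mem_auxNB G S).mp huNq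
    obtain ⟨-, hqw⟩ := (mem_auxNB G S).mp hwNq
    by_contra hadj
    exact c4_of_config G h huw hpq (hSst huS hwS huw) hadj hpu.symm hpw hqw.symm hqu
  have cliq : ∀ x, G.IsClique (auxF G S x) := by
    intro x
    by_cases hx : x ∈ S
    · rw [auxF, if_pos hx]; exact cliq_pv x hx
    · rw [auxF, if_neg hx]
      by_cases h1 : (auxNB G S x).card = 1
      · rw [if_pos h1]
        have hrv : auxRep G S x ∈ S := by
          have := auxRep_spec G S h1
          have hmem : auxRep G S x ∈ auxNB G S x := by rw [this]; simp
          exact ((mem_auxNB G S).mp hmem).1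
        exact cliq_pv _ hrv
      · rw [if_neg h1]; exact cliq_qp _
  -- the cover
  set Sf : Finset V := (Set.toFinite S).toFinset with hSf
  have hSfmem : ∀ w, w ∈ Sf ↔ w ∈ S := fun w => Set.Finite.mem_toFinset _
  have hSfcard : Sf.card = a := by
    rw [hSf, ← Set.ncard_eq_toFinset_card _ (Set.toFinite S), hScard]
  set F : Finset (Set V) := Finset.image (auxF G S) Finset.univ with hF
  have hcover : ∀ v : V, ∃! C : Set V, C ∈ F ∧ v ∈ C := by
    intro v
    refine ⟨auxF G S v, ⟨Finset.mem_image_of_mem _ (Finset.mem_univ v), memf v⟩, ?_⟩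
    rintro C ⟨hCF, hvC⟩
    obtain ⟨x, -, rfl⟩ := Finset.mem_image.mp hCF
    exact (eqf x v hvC).symm
  have hcliqF : ∀ C ∈ F, G.IsClique C := by
    intro C hC
    obtain ⟨x, -, rfl⟩ := Finset.mem_image.mp hC
    exact cliq x
  have hsubF : F ⊆ Sf.image (auxPv G S) ∪ (Sf.powersetCard 2).image (auxQp G S) := by
    intro C hC
    obtain ⟨x, -, rfl⟩ := Finset.mem_image.mp hC
    by_cases hx : x ∈ S
    · rw [auxF, if_pos hx]
      exact Finset.mem_union_left _
        (Finset.mem_image_of_mem _ ((hSfmem x).mpr hx))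
    · rw [auxF, if_neg hx]
      by_cases h1 : (auxNB G S x).card = 1
      · rw [if_pos h1]
        have hrv : auxRep G S x ∈ S := by
          have := auxRep_spec G S h1
          have hmem : auxRep G S x ∈ auxNB G S x := by rw [this]; simp
          exact ((mem_auxNB G S).mp hmem).1
        exact Finset.mem_union_left _
          (Finset.mem_image_of_mem _ ((hSfmem _).mpr hrv))
      · rw [if_neg h1]
        have hpos : 0 < (auxNB G S x).card := Finset.card_pos.mpr (hM1 x hx)
        have h2 : 2 ≤ (auxNB G S x).card := by omega
        obtain ⟨hsub, hcard2⟩ := auxPr_spec G S h2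
        refine Finset.mem_union_right _ (Finset.mem_image_of_mem _ ?_)
        rw [Finset.mem_powersetCard]
        refine ⟨fun w hw => ?_, hcard2⟩
        exact (hSfmem w).mpr ((mem_auxNB G S).mp (hsub hw)).1
  have hcard : F.card ≤ a + a.choose 2 := by
    calc F.card ≤ (Sf.image (auxPv G S) ∪ (Sf.powersetCard 2).image (auxQp G S)).card :=
          Finset.card_le_card hsubF
      _ ≤ (Sf.image (auxPv G S)).card + ((Sf.powersetCard 2).image (auxQp G S)).card :=
          Finset.card_union_le _ _
      _ ≤ Sf.card + (Sf.powersetCard 2).card :=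
          Nat.add_le_add (Finset.card_image_le) (Finset.card_image_le)
      _ = a + a.choose 2 := by rw [hSfcard, Finset.card_powersetCard, hSfcard]
  have hfinal : a + a.choose 2 = (a + 1).choose 2 := by
    rw [Nat.choose_succ_succ a 1, Nat.choose_one_right]
  have hle : cliqueCoverNum G ≤ F.card :=
    Nat.sInf_le ⟨F, rfl, hcliqF, hcover⟩
  omega


end Paper
end

section
/- Every finite simple C4-free graph G satisfies ta(G) ≤ tc(G) ≤ binomial(ta(G)+1, 2), where ta is the tree independence number and tc is the tree clique cover number. -/
open SimpleGraph

namespace Paper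

variable {V : Type*}

section Aux

variable {W : Type*}

/-- The trivial tree decomposition with a single bag. -/
noncomputable def trivialDecomp (G : SimpleGraph V) : TreeDecomp G where
  ι := PUnit
  tree := ⊥
  tree_acyclic := isAcyclic_bot
  tree_connected := by
    constructor
    intro a b
    rw [Subsingleton.elim a b]
  bag _ := Set.univ
  bag_cover v := ⟨PUnit.unit, Set.mem_univ v⟩
  bag_edge u v _ := ⟨PUnit.unit, Set.mem_univ u, Set.mem_univ v⟩
  bag_subtree v := by
    haveI : Nonempty {t : PUnit | v ∈ (Set.univ : Set V)} := ⟨⟨PUnit.unit, Set.mem_univ v⟩⟩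
    constructor
    intro a b
    rw [Subsingleton.elim a b]

lemma stable_ncard_le_indepNum [Fintype W] (H : SimpleGraph W) {S : Set W}
    (hS : S.Pairwise fun u v => ¬ H.Adj u v) : S.ncard ≤ indepNum H := by
  apply le_csSup
  · refine ⟨Fintype.card W, ?_⟩
    rintro n ⟨T, _, rfl⟩
    have := Set.ncard_le_ncard (Set.subset_univ T) Set.finite_univ
    simpa [Set.ncard_univ] using this
  · exact ⟨S, hS, rfl⟩

lemma exists_max_indep [Fintype W] (H : SimpleGraph W) :
    ∃ I : Set W, (I.Pairwise fun u v => ¬ H.Adj u v) ∧ I.ncard = indepNum H := by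
  have h1 : {n | ∃ S : Set W, (S.Pairwise fun u v => ¬ H.Adj u v) ∧ S.ncard = n}.Nonempty :=
    ⟨0, ∅, Set.pairwise_empty _, by simp⟩
  have h2 : BddAbove {n | ∃ S : Set W, (S.Pairwise fun u v => ¬ H.Adj u v) ∧ S.ncard = n} := by
    refine ⟨Fintype.card W, ?_⟩
    rintro n ⟨T, _, rfl⟩
    have := Set.ncard_le_ncard (Set.subset_univ T) Set.finite_univ
    simpa [Set.ncard_univ] using this
  obtain ⟨S, hS, hcard⟩ := Nat.sSup_mem h1 h2
  exact ⟨S, hS, hcard⟩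

lemma indepNum_le_cliqueCoverNum [Fintype W] (H : SimpleGraph W) :
    indepNum H ≤ cliqueCoverNum H := by
  classical
  have hne : {n | ∃ F : Finset (Set W), F.card = n ∧ (∀ C ∈ F, H.IsClique C) ∧
      ∀ v : W, ∃! C : Set W, C ∈ F ∧ v ∈ C}.Nonempty := by
    refine ⟨(Finset.univ.image fun v : W => ({v} : Set W)).card,
      Finset.univ.image fun v : W => ({v} : Set W), rfl, ?_, ?_⟩
    · intro C hC
      obtain ⟨v, _, rfl⟩ := Finset.mem_image.mp hC
      exact Set.pairwise_singleton v H.Adj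
    · intro v
      refine ⟨{v}, ⟨Finset.mem_image_of_mem _ (Finset.mem_univ v), rfl⟩, ?_⟩
      rintro C ⟨hCF, hvC⟩
      obtain ⟨u, _, rfl⟩ := Finset.mem_image.mp hCF
      rw [Set.mem_singleton_iff] at hvC
      rw [hvC]
  obtain ⟨F, hFcard, hFclique, hFcov⟩ := Nat.sInf_mem hne
  apply csSup_le'
  rintro n ⟨S, hS, rfl⟩
  choose g hg using fun v => (hFcov v).exists
  have hinj : Set.InjOn g S := by
    intro u hu w hw huw
    by_contra hne'
    have hadj : H.Adj u w := (hFclique _ (hg u).1) (hg u).2 (huw ▸ (hg w).2) hne'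
    exact hS hu hw hne' hadj
  calc S.ncard = (g '' S).ncard := (Set.ncard_image_of_injOn hinj).symm
    _ ≤ (↑F : Set (Set W)).ncard := by
        apply Set.ncard_le_ncard _ F.finite_toSet
        rintro _ ⟨v, _, rfl⟩
        exact (hg v).1
    _ = F.card := Set.ncard_coe_finset F
    _ = cliqueCoverNum H := hFcard

lemma cliqueCoverNum_le_of_cover [Fintype W] (H : SimpleGraph W) (F : Finset (Set W))
    (hcl : ∀ C ∈ F, H.IsClique C) (hcov : ∀ v, ∃ C ∈ F, v ∈ C) :
    cliqueCoverNum H ≤ F.card := by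
  classical
  choose g hgF hgv using hcov
  let part : Set W → Set W := fun C => {v | g v = C}
  have hsub : ∀ C, part C ⊆ C := by
    rintro C v (hv : g v = C)
    exact hv ▸ hgv v
  have h1 : cliqueCoverNum H ≤ (F.image part).card := by
    apply Nat.sInf_le
    refine ⟨F.image part, rfl, ?_, ?_⟩
    · intro D hD
      obtain ⟨C, hC, rfl⟩ := Finset.mem_image.mp hD
      exact (hcl C hC).subset (hsub C)
    · intro v
      refine ⟨part (g v), ⟨Finset.mem_image_of_mem _ (hgF v), rfl⟩, ?_⟩
      rintro D ⟨hDF, hvD⟩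
      obtain ⟨C, _, rfl⟩ := Finset.mem_image.mp hDF
      have : g v = C := hvD
      rw [this]
  exact h1.trans (Finset.card_image_le)

/-- Isomorphism between a doubly-induced subgraph and the induced subgraph on the image. -/
noncomputable def induceInduceIso (G : SimpleGraph V) (S : Set V) (T : Set ↥S) :
    ((G.induce S).induce T) ≃g (G.induce (Subtype.val '' T)) where
  toEquiv := Equiv.Set.image Subtype.val T Subtype.val_injective
  map_rel_iff' := Iff.rfl

lemma free_induce {W : Type*} {G : SimpleGraph V} {H : SimpleGraph W}
    (h : Free G H) (S : Set V) : Free (G.induce S) H := by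
  rintro ⟨T, ⟨e⟩⟩
  exact h ⟨Subtype.val '' T, ⟨((induceInduceIso G S T).symm.trans e : _)⟩⟩

lemma containsInduced_c4 {W : Type*} (H : SimpleGraph W) {x v y w : W}
    (hxy : x ≠ y) (hvw : v ≠ w)
    (hvx : H.Adj v x) (hwx : H.Adj w x) (hvy : H.Adj v y) (hwy : H.Adj w y)
    (hnadj : ¬ H.Adj x y) (hvwadj : ¬ H.Adj v w) :
    ContainsInduced H (cycleGraph 4) := by
  have hxv : x ≠ v := fun he => H.irrefl (he ▸ hvx)
  have hxw : x ≠ w := fun he => H.irrefl (he ▸ hwx)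
  have hyv : y ≠ v := fun he => H.irrefl (he ▸ hvy)
  have hyw : y ≠ w := fun he => H.irrefl (he ▸ hwy)
  have h1 : ¬ H.Adj y x := fun h' => hnadj h'.symm
  have h2 : ¬ H.Adj w v := fun h' => hvwadj h'.symm
  have hginj : Function.Injective ![x, v, y, w] := by
    intro i j hij
    fin_cases i <;> fin_cases j <;> simp_all
  have hadj : ∀ i j : Fin 4,
      (cycleGraph 4).Adj i j ↔ H.Adj (![x, v, y, w] i) (![x, v, y, w] j) := by
    intro i j
    fin_cases i <;> fin_cases j <;>
      simp [cycleGraph_adj, H.irrefl, hvx, hwx, hvy, hwy, hnadj, hvwadj,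
        hvx.symm, hwx.symm, hvy.symm, hwy.symm, h1, h2] <;> decide
  refine ⟨Set.range ![x, v, y, w], ⟨?_⟩⟩
  refine ⟨(Equiv.ofInjective _ hginj).symm, ?_⟩
  intro a b
  have ha := Equiv.apply_ofInjective_symm hginj a
  have hb := Equiv.apply_ofInjective_symm hginj b
  show (cycleGraph 4).Adj _ _ ↔ H.Adj ↑a ↑b
  rw [hadj, ha, hb]

lemma cliqueCoverNum_le_choose [Fintype W] (H : SimpleGraph W)
    (hfree : Free H (cycleGraph 4)) :
    cliqueCoverNum H ≤ (indepNum H + 1).choose 2 := by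
  classical
  obtain ⟨I, hIstab, hIcard⟩ := exists_max_indep H
  set α := indepNum H with hα
  -- the "private neighbor" cliques
  set A : W → Set W := fun v => insert v {u | {a | a ∈ I ∧ H.Adj u a} = {v}} with hA
  -- the "common neighborhood" cliques
  set B : W → W → Set W := fun v w => {u | H.Adj v u ∧ H.Adj w u} with hB
  set f : Sym2 W → Set W := Sym2.lift ⟨fun v w => if v = w then A v else B v w, by
    intro v w
    dsimp only
    by_cases hvw : v = w
    · subst hvw; rfl
    · rw [if_neg hvw, if_neg (Ne.symm hvw)]
      ext u
      exact and_comm⟩ with hf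
  have hf_diag : ∀ v, f s(v, v) = A v := fun v => by simp [hf]
  have hf_off : ∀ v w, v ≠ w → f s(v, w) = B v w := fun v w hvw => by
    simp [hf, hvw]
  set F : Finset (Set W) := I.toFinset.sym2.image f with hF
  -- claim: A v is a clique for v ∈ I
  have hAclique : ∀ v ∈ I, H.IsClique (A v) := by
    intro v hv
    intro x hx y hy hxy
    by_contra hnadj
    -- first, membership analysis
    have hcore : ∀ z ∈ A v, z ≠ v → ({a | a ∈ I ∧ H.Adj z a} = {v}) := by
      intro z hz hzv
      rcases Set.mem_insert_iff.mp hz with rfl | hz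
      · exact absurd rfl hzv
      · exact hz
    -- the key: any core element is adjacent to v and not in I
    have hkey : ∀ z ∈ A v, z ≠ v → H.Adj z v ∧ z ∉ I := by
      intro z hz hzv
      have h1 := hcore z hz hzv
      have h2 : v ∈ {a | a ∈ I ∧ H.Adj z a} := h1 ▸ Set.mem_singleton v
      refine ⟨h2.2, fun hzI => ?_⟩
      exact hIstab hzI hv (fun he => H.irrefl (he ▸ h2.2)) h2.2
    -- case analysis on x, y
    rcases eq_or_ne x v with hxv | hxv
    · rcases eq_or_ne y v with hyv | hyv
      · exact hxy (hxv.trans hyv.symm)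
      · exact hnadj (by rw [hxv]; exact (hkey y hy hyv).1.symm)
    · rcases eq_or_ne y v with hyv | hyv
      · exact hnadj (by rw [hyv]; exact (hkey x hx hxv).1)
      · -- both core: build a bigger stable set
        obtain ⟨hxadj, hxI⟩ := hkey x hx hxv
        obtain ⟨hyadj, hyI⟩ := hkey y hy hyv
        have hxset := hcore x hx hxv
        have hyset := hcore y hy hyv
        set J : Set W := (I \ {v}) ∪ {x, y} with hJ
        have hJstab : J.Pairwise fun u w => ¬ H.Adj u w := by
          rintro a (⟨haI, hav⟩ | ha) b (⟨hbI, hbv⟩ | hb) hab hadj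
          · exact hIstab haI hbI hab hadj
          · rcases hb with rfl | rfl
            · exact hav (hxset ▸ Set.mem_setOf.mpr ⟨haI, hadj.symm⟩)
            · exact hav (hyset ▸ Set.mem_setOf.mpr ⟨haI, hadj.symm⟩)
          · rcases ha with rfl | rfl
            · exact hbv (hxset ▸ Set.mem_setOf.mpr ⟨hbI, hadj⟩)
            · exact hbv (hyset ▸ Set.mem_setOf.mpr ⟨hbI, hadj⟩)
          · rcases ha with rfl | rfl <;> rcases hb with rfl | rfl
            · exact hab rfl
            · exact hnadj hadj
            · exact hnadj hadj.symm
            · exact hab rfl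
        have hdisj : Disjoint (I \ {v}) ({x, y} : Set W) := by
          rw [Set.disjoint_right]
          rintro z (rfl | rfl) ⟨hzI, _⟩
          · exact hxI hzI
          · exact hyI hzI
        have hcard : J.ncard = α + 1 := by
          rw [hJ, Set.ncard_union_eq hdisj ((Set.toFinite _)) (Set.toFinite _),
            Set.ncard_diff_singleton_of_mem hv,
            Set.ncard_pair hxy, hIcard]
          have : 1 ≤ α := by
            rw [← hIcard]
            exact (Set.ncard_pos (Set.toFinite _)).mpr ⟨v, hv⟩
          omega
        have := stable_ncard_le_indepNum H hJstab
        rw [hcard] at this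
        omega
  -- claim: B v w is a clique for v ≠ w both in I
  have hBclique : ∀ v ∈ I, ∀ w ∈ I, v ≠ w → H.IsClique (B v w) := by
    intro v hv w hw hvw
    intro x hx y hy hxy
    by_contra hnadj
    have hvwadj : ¬ H.Adj v w := hIstab hv hw hvw
    obtain ⟨hvx, hwx⟩ := hx
    obtain ⟨hvy, hwy⟩ := hy
    exact hfree (containsInduced_c4 H hxy hvw hvx hwx hvy hwy hnadj hvwadj)
  -- every vertex is covered
  have hcov : ∀ u : W, ∃ C ∈ F, u ∈ C := by
    intro u
    by_cases huI : u ∈ I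
    · refine ⟨f s(u, u), ?_, ?_⟩
      · exact Finset.mem_image_of_mem f (Finset.mk_mem_sym2_iff.mpr
          ⟨Set.mem_toFinset.mpr huI, Set.mem_toFinset.mpr huI⟩)
      · rw [hf_diag]
        exact Set.mem_insert u _
    · -- u has a neighbor in I
      have hne : {a | a ∈ I ∧ H.Adj u a}.Nonempty := by
        by_contra hemp
        rw [Set.not_nonempty_iff_eq_empty] at hemp
        have hstab : (insert u I).Pairwise fun a b => ¬ H.Adj a b := by
          have hsymm : Symmetric fun a b => ¬ H.Adj a b := fun a b h hab => h hab.symm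
          refine (haveI : Std.Symm (fun a b : W => ¬ H.Adj a b) := ⟨fun a b h => hsymm h⟩; Set.pairwise_insert_of_symmetric).mpr ⟨hIstab, fun b hb _ hadj => ?_⟩
          have : b ∈ {a | a ∈ I ∧ H.Adj u a} := ⟨hb, hadj⟩
          rw [hemp] at this
          exact this
        have hc : (insert u I).ncard = α + 1 := by
          rw [Set.ncard_insert_of_notMem huI (Set.toFinite _), hIcard]
        have := stable_ncard_le_indepNum H hstab
        rw [hc] at this
        omega
      obtain ⟨v, hvI, hvadj⟩ := hne
      by_cases hsingle : ∃ w, w ∈ {a | a ∈ I ∧ H.Adj u a} ∧ w ≠ v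
      · obtain ⟨w, ⟨hwI, hwadj⟩, hwv⟩ := hsingle
        refine ⟨f s(v, w), ?_, ?_⟩
        · exact Finset.mem_image_of_mem f (Finset.mk_mem_sym2_iff.mpr
            ⟨Set.mem_toFinset.mpr hvI, Set.mem_toFinset.mpr hwI⟩)
        · rw [hf_off v w (Ne.symm hwv)]
          exact ⟨hvadj.symm, hwadj.symm⟩
      · push_neg at hsingle
        have hset : {a | a ∈ I ∧ H.Adj u a} = {v} := by
          apply Set.eq_singleton_iff_unique_mem.mpr
          exact ⟨⟨hvI, hvadj⟩, fun w hw => hsingle w hw⟩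
        refine ⟨f s(v, v), ?_, ?_⟩
        · exact Finset.mem_image_of_mem f (Finset.mk_mem_sym2_iff.mpr
            ⟨Set.mem_toFinset.mpr hvI, Set.mem_toFinset.mpr hvI⟩)
        · rw [hf_diag]
          exact Set.mem_insert_of_mem v hset
  -- every member of F is a clique
  have hcl : ∀ C ∈ F, H.IsClique C := by
    intro C hC
    obtain ⟨e, he, rfl⟩ := Finset.mem_image.mp hC
    induction e with
    | h v w =>
      rw [Finset.mk_mem_sym2_iff] at he
      obtain ⟨hv, hw⟩ := he
      rw [Set.mem_toFinset] at hv hw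
      rcases eq_or_ne v w with rfl | hvw
      · rw [hf_diag]
        exact hAclique v hv
      · rw [hf_off v w hvw]
        exact hBclique v hv w hw hvw
  calc cliqueCoverNum H ≤ F.card := cliqueCoverNum_le_of_cover H F hcl hcov
    _ ≤ I.toFinset.sym2.card := Finset.card_image_le
    _ = (I.toFinset.card + 1).choose 2 := Finset.card_sym2 _
    _ = (α + 1).choose 2 := by rw [← Set.ncard_eq_toFinset_card', hIcard]

end Aux

theorem statement4 {V : Type} [Fintype V] (G : SimpleGraph V)
    (h : Free G (cycleGraph 4)) :
    treeIndepNum G ≤ treeCliqueCoverNum G ∧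
      treeCliqueCoverNum G ≤ (treeIndepNum G + 1).choose 2 := by
  classical
  haveI : ∀ S : Set V, Fintype ↥S := fun S => Fintype.ofFinite ↥S
  constructor
  · have hne : {k | ∃ D : TreeDecomp G, ∀ t, cliqueCoverNum (G.induce (D.bag t)) ≤ k}.Nonempty :=
      ⟨cliqueCoverNum (G.induce (Set.univ : Set V)), trivialDecomp G, fun _ => le_refl _⟩
    obtain ⟨D, hD⟩ := Nat.sInf_mem hne
    apply Nat.sInf_le
    exact ⟨D, fun t => (indepNum_le_cliqueCoverNum _).trans (hD t)⟩
  · have hne : {k | ∃ D : TreeDecomp G, ∀ t, indepNum (G.induce (D.bag t)) ≤ k}.Nonempty :=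
      ⟨indepNum (G.induce (Set.univ : Set V)), trivialDecomp G, fun _ => le_refl _⟩
    obtain ⟨D, hD⟩ := Nat.sInf_mem hne
    apply Nat.sInf_le
    refine ⟨D, fun t => ?_⟩
    calc cliqueCoverNum (G.induce (D.bag t))
        ≤ (indepNum (G.induce (D.bag t)) + 1).choose 2 :=
          cliqueCoverNum_le_choose _ (free_induce h _)
      _ ≤ (treeIndepNum G + 1).choose 2 :=
          Nat.choose_le_choose 2 (Nat.add_le_add_right (hD t) 1)

end Paper
end

section
/- For every positive integer C there exists a finite simple graph G with ta(G) ≤ 2 and tc(G) ≥ C, where ta is the tree independence number and tc is the tree clique cover number. -/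
open SimpleGraph

namespace Paper

variable {V : Type*}

/-! ### Auxiliary material for `statement5` -/

section Statement5Aux

open SimpleGraph Walk

/-- "No independent triple": every graph with independence number at most 2. -/
def NoTriple (G : SimpleGraph V) : Prop :=
  ∀ u v w : V, u ≠ v → u ≠ w → v ≠ w →
    ¬ G.Adj u v → ¬ G.Adj u w → ¬ G.Adj v w → False

lemma nonclique_pair {G : SimpleGraph V} {S : Set V} (h : ¬ G.IsClique S) :
    ∃ u ∈ S, ∃ v ∈ S, u ≠ v ∧ ¬ G.Adj u v := by
  rw [SimpleGraph.isClique_iff, Set.Pairwise] at h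
  push_neg at h
  obtain ⟨u, hu, v, hv, hne, hnadj⟩ := h
  exact ⟨u, hu, v, hv, hne, hnadj⟩

variable {G : SimpleGraph V}

/-- `s` lies on the `r'`-side of the tree edge `r r'` (deleting the vertex `r`). -/
def Sd (D : TreeDecomp G) (r r' s : D.ι) : Prop :=
  D.tree.Adj r r' ∧ ∃ w : D.tree.Walk r' s, r ∉ w.support

/-- The set of vertices of `G` all of whose bags lie on the `r'`-side of `r`. -/
def Pt (D : TreeDecomp G) (r r' : D.ι) : Set V :=
  {v | v ∉ D.bag r ∧ ∀ s, v ∈ D.bag s → Sd D r r' s}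

lemma sd_nil {D : TreeDecomp G} {r a : D.ι} (h : D.tree.Adj r a) : Sd D r a a :=
  ⟨h, Walk.nil, by simpa using h.ne⟩

lemma sd_not_self {D : TreeDecomp G} {r a : D.ι} (h : Sd D r a r) : False := by
  obtain ⟨_, w, hw⟩ := h
  exact hw w.end_mem_support

lemma walk_cons_decomp {ι : Type} {T : SimpleGraph ι} {r s : ι} (p : T.Walk r s)
    (hp : p.IsPath) (hne : r ≠ s) :
    ∃ (a : ι) (h : T.Adj r a) (t : T.Walk a s),
      t.IsPath ∧ r ∉ t.support ∧ Walk.cons h t = p := by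
  cases p with
  | nil => exact absurd rfl hne
  | cons h t =>
      rw [Walk.cons_isPath_iff] at hp
      exact ⟨_, h, t, hp.1, hp.2, rfl⟩

lemma sd_total {D : TreeDecomp G} {r s : D.ι} (h : s ≠ r) : ∃ r', Sd D r r' s := by
  classical
  obtain ⟨w⟩ := D.tree_connected.preconnected r s
  obtain ⟨a, ha, t, htp, hrt, -⟩ := walk_cons_decomp (w.toPath : D.tree.Walk r s)
    w.toPath.2 (Ne.symm h)
  exact ⟨a, ha, t, hrt⟩

lemma sd_unique {D : TreeDecomp G} {r a b s : D.ι} (ha : Sd D r a s) (hb : Sd D r b s) :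
    a = b := by
  classical
  obtain ⟨hadja, wa, hwa⟩ := ha
  obtain ⟨hadjb, wb, hwb⟩ := hb
  set w : D.tree.Walk a b := wa.append wb.reverse with hw
  have hrw : r ∉ w.support := by
    intro hr
    rw [hw, Walk.support_append] at hr
    rcases List.mem_append.mp hr with h | h
    · exact hwa h
    · have := List.mem_of_mem_tail h
      rw [Walk.support_reverse, List.mem_reverse] at this
      exact hwb this
  set p : D.tree.Walk a b := (w.toPath : D.tree.Walk a b) with hpdef
  have hp : p.IsPath := w.toPath.2
  have hrp : r ∉ p.support := fun hm => hrw (Walk.support_toPath_subset w hm)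
  have h1 : (Walk.cons hadja p).IsPath := hp.cons hrp
  have h2 : (Walk.cons hadjb (Walk.nil)).IsPath := by
    simp [Walk.isPath_def, hadjb.ne]
  have heq := isAcyclic_iff_path_unique.mp D.tree_acyclic
    ⟨Walk.cons hadja p, h1⟩ ⟨Walk.cons hadjb Walk.nil, h2⟩
  have hlen := congrArg (fun q : D.tree.Path r b => (q : D.tree.Walk r b).length) heq
  simp only [Walk.length_cons, Walk.length_nil] at hlen
  exact Walk.eq_of_length_eq_zero (p := p) (by omega)

lemma sd_of_walk {D : TreeDecomp G} {r a s s' : D.ι} (h : Sd D r a s)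
    (w : D.tree.Walk s s') (hw : r ∉ w.support) : Sd D r a s' := by
  obtain ⟨hadj, w0, hw0⟩ := h
  refine ⟨hadj, w0.append w, ?_⟩
  intro hm
  rw [Walk.support_append] at hm
  rcases List.mem_append.mp hm with h | h
  · exact hw0 h
  · exact hw (List.mem_of_mem_tail h)

lemma bag_walk {D : TreeDecomp G} {v : V} {s₀ s₁ : D.ι}
    (h0 : v ∈ D.bag s₀) (h1 : v ∈ D.bag s₁) :
    ∃ w : D.tree.Walk s₀ s₁, ∀ x ∈ w.support, v ∈ D.bag x := by
  obtain ⟨w'⟩ := (D.bag_subtree v).preconnected ⟨s₀, h0⟩ ⟨s₁, h1⟩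
  refine ⟨w'.map (SimpleGraph.Embedding.induce _).toHom, ?_⟩
  intro x hx
  have hx' : x ∈ (w'.map (SimpleGraph.Embedding.induce {t | v ∈ D.bag t}).toHom).support := hx
  rw [Walk.support_map] at hx'
  obtain ⟨y, hy, rfl⟩ := List.mem_map.mp hx'
  exact y.2

lemma part_cover {D : TreeDecomp G} {v : V} {r : D.ι} (hv : v ∉ D.bag r) :
    ∃ a, v ∈ Pt D r a := by
  obtain ⟨s₀, hs₀⟩ := D.bag_cover v
  have hs₀r : s₀ ≠ r := fun h => hv (h ▸ hs₀)
  obtain ⟨a, ha⟩ := sd_total hs₀r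
  refine ⟨a, hv, fun s hs => ?_⟩
  obtain ⟨w, hw⟩ := bag_walk hs₀ hs
  exact sd_of_walk ha w fun hr => hv (hw r hr)

lemma part_disj {D : TreeDecomp G} {u w : V} {r a b : D.ι}
    (hu : u ∈ Pt D r a) (hw : w ∈ Pt D r b) (hab : a ≠ b) :
    u ≠ w ∧ ¬ G.Adj u w := by
  constructor
  · rintro rfl
    obtain ⟨s, hs⟩ := D.bag_cover u
    exact hab (sd_unique (hu.2 s hs) (hw.2 s hs))
  · intro hadj
    obtain ⟨s, hs1, hs2⟩ := D.bag_edge hadj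
    exact hab (sd_unique (hu.2 s hs1) (hw.2 s hs2))

lemma strong_fact {D : TreeDecomp G} (hG : NoTriple G) {r r₁ : D.ι} {u v : V}
    (hu : u ∈ Pt D r r₁) (hv : v ∈ Pt D r r₁) (hne : u ≠ v) (hnadj : ¬ G.Adj u v) :
    ∀ w, w ∈ D.bag r ∨ w ∈ Pt D r r₁ := by
  intro w
  by_cases hw : w ∈ D.bag r
  · exact Or.inl hw
  right
  obtain ⟨b, hb⟩ := part_cover hw
  by_cases hbr : b = r₁
  · exact hbr ▸ hb
  · exfalso
    obtain ⟨d1, n1⟩ := part_disj hb hu hbr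
    obtain ⟨d2, n2⟩ := part_disj hb hv hbr
    exact hG w u v d1 d2 hne n1 n2 hnadj

lemma sd_step {D : TreeDecomp G} {r r₁ x s : D.ι} (h : D.tree.Adj r r₁) (hx : x ≠ r)
    (hs : Sd D r₁ x s) : Sd D r r₁ s := by
  classical
  obtain ⟨hadj, w, hw⟩ := hs
  by_cases hr : r ∈ w.support
  · exfalso
    have h1 : Sd D r₁ x r :=
      ⟨hadj, w.takeUntil r hr, fun hm => hw (Walk.support_takeUntil_subset _ _ hm)⟩
    exact hx (sd_unique h1 (sd_nil h.symm))
  · refine ⟨h, Walk.cons hadj w, ?_⟩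
    rw [Walk.support_cons]
    intro hm
    rcases List.mem_cons.mp hm with h' | h'
    · exact h.ne h'
    · exact hr h'

lemma pt_subset {D : TreeDecomp G} {r r₁ x : D.ι} (h : D.tree.Adj r r₁) (hx : x ≠ r) :
    Pt D r₁ x ⊆ Pt D r r₁ := by
  intro v hv
  constructor
  · intro hvr
    exact hx (sd_unique (hv.2 r hvr) (sd_nil h.symm))
  · exact fun s hs => sd_step h hx (hv.2 s hs)

lemma sd_opp {D : TreeDecomp G} {r r₁ s : D.ι} (h : D.tree.Adj r r₁)
    (h1 : Sd D r r₁ s) (h2 : Sd D r₁ r s) : False := by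
  classical
  obtain ⟨-, w, hw⟩ := h2
  by_cases hsr : s = r
  · exact sd_not_self (hsr ▸ h1)
  · set p : D.tree.Walk r s := (w.toPath : D.tree.Walk r s) with hpdef
    have hp : p.IsPath := w.toPath.2
    have hp1 : r₁ ∉ p.support := fun hm => hw (Walk.support_toPath_subset w hm)
    obtain ⟨a, hadj, t, htp, hrt, hcons⟩ := walk_cons_decomp p hp (Ne.symm hsr)
    have hSd : Sd D r a s := ⟨hadj, t, hrt⟩
    have : r₁ = a := sd_unique h1 hSd
    apply hp1
    rw [← hcons, Walk.support_cons, this]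
    exact List.mem_cons_of_mem _ t.start_mem_support

lemma sd_path_length {D : TreeDecomp G} {r₁ x s : D.ι} (hSd : Sd D r₁ x s)
    (p : D.tree.Walk r₁ s) (hp : p.IsPath) :
    ∃ q : D.tree.Walk x s, q.IsPath ∧ q.length + 1 = p.length := by
  classical
  obtain ⟨hadj, w, hw⟩ := hSd
  set q : D.tree.Walk x s := (w.toPath : D.tree.Walk x s) with hqdef
  have hq : q.IsPath := w.toPath.2
  have hr : r₁ ∉ q.support := fun hm => hw (Walk.support_toPath_subset w hm)
  have hcons : (Walk.cons hadj q).IsPath := hq.cons hr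
  have heq := isAcyclic_iff_path_unique.mp D.tree_acyclic ⟨Walk.cons hadj q, hcons⟩ ⟨p, hp⟩
  have hlen := congrArg (fun z : D.tree.Path r₁ s => (z : D.tree.Walk r₁ s).length) heq
  simp only [Walk.length_cons] at hlen
  exact ⟨q, hq, hlen⟩

/-- The conclusion of the tree-decomposition analysis: two bags and two cliques cover `V`. -/
def CoverGoal (D : TreeDecomp G) : Prop :=
  ∃ (t t' : D.ι) (K₁ K₂ : Set V), G.IsClique K₁ ∧ G.IsClique K₂ ∧
    ∀ w : V, w ∈ D.bag t ∨ w ∈ D.bag t' ∨ w ∈ K₁ ∨ w ∈ K₂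

lemma good_node {D : TreeDecomp G} (hG : NoTriple G) {r : D.ι}
    (hr : ∀ a, G.IsClique (Pt D r a)) : CoverGoal D := by
  classical
  by_cases h0 : ∀ w, w ∈ D.bag r
  · exact ⟨r, r, ∅, ∅, G.isClique_empty, G.isClique_empty, fun w => Or.inl (h0 w)⟩
  push_neg at h0
  obtain ⟨v₀, hv₀⟩ := h0
  obtain ⟨a, ha⟩ := part_cover hv₀
  by_cases h1 : ∃ b v, b ≠ a ∧ v ∈ Pt D r b
  · obtain ⟨b, v₁, hba, hb⟩ := h1
    refine ⟨r, r, Pt D r a, Pt D r b, hr a, hr b, fun w => ?_⟩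
    by_cases hw : w ∈ D.bag r
    · exact Or.inl hw
    obtain ⟨c, hc⟩ := part_cover hw
    by_cases hca : c = a
    · exact Or.inr (Or.inr (Or.inl (hca ▸ hc)))
    by_cases hcb : c = b
    · exact Or.inr (Or.inr (Or.inr (hcb ▸ hc)))
    · exfalso
      obtain ⟨d1, n1⟩ := part_disj hc ha hca
      obtain ⟨d2, n2⟩ := part_disj hc hb hcb
      obtain ⟨d3, n3⟩ := part_disj ha hb fun h => hba h.symm
      exact hG w v₀ v₁ d1 d2 d3 n1 n2 n3
  · push_neg at h1
    refine ⟨r, r, Pt D r a, ∅, hr a, G.isClique_empty, fun w => ?_⟩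
    by_cases hw : w ∈ D.bag r
    · exact Or.inl hw
    obtain ⟨c, hc⟩ := part_cover hw
    by_cases hca : c = a
    · exact Or.inr (Or.inr (Or.inl (hca ▸ hc)))
    · exact absurd hc (h1 c w hca)

lemma descent [Finite V] {D : TreeDecomp G} (hG : NoTriple G) :
    ∀ N L : ℕ, ∀ (r r₁ : D.ι) (u v : V) (s_u : D.ι) (p : D.tree.Walk r₁ s_u),
      D.tree.Adj r r₁ → u ∈ Pt D r r₁ → v ∈ Pt D r r₁ → u ≠ v → ¬ G.Adj u v →
      u ∈ D.bag s_u → p.IsPath → (Pt D r r₁).ncard ≤ N → p.length ≤ L → CoverGoal D := by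
  classical
  intro N
  induction N using Nat.strong_induction_on with
  | _ N ihN =>
  intro L
  induction L using Nat.strong_induction_on with
  | _ L ihL =>
  intro r r₁ u v s_u p hadj hu hv hne hnadj hbag hp hN hL
  by_cases hgood : ∀ a, G.IsClique (Pt D r₁ a)
  · exact good_node hG hgood
  push_neg at hgood
  obtain ⟨x, hx⟩ := hgood
  obtain ⟨u', hu'C, v', hv'C, hne', hnadj'⟩ := nonclique_pair hx
  have hadj1 : D.tree.Adj r₁ x := by
    obtain ⟨s, hs⟩ := D.bag_cover u'
    exact (hu'C.2 s hs).1
  by_cases hxr : x = r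
  · have hu'r : u' ∈ Pt D r₁ r := hxr ▸ hu'C
    have hv'r : v' ∈ Pt D r₁ r := hxr ▸ hv'C
    refine ⟨r, r₁, ∅, ∅, G.isClique_empty, G.isClique_empty, fun w => ?_⟩
    rcases strong_fact hG hu hv hne hnadj w with h | h
    · exact Or.inl h
    · rcases strong_fact hG hu'r hv'r hne' hnadj' w with h' | h'
      · exact Or.inr (Or.inl h')
      · exfalso
        obtain ⟨s, hs⟩ := D.bag_cover w
        exact sd_opp hadj (h.2 s hs) (h'.2 s hs)
  · have hsub : Pt D r₁ x ⊆ Pt D r r₁ := pt_subset hadj hxr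
    by_cases hub : u ∈ D.bag r₁ ∨ v ∈ D.bag r₁
    · -- cardinality decreases
      have hne_sets : Pt D r₁ x ≠ Pt D r r₁ := by
        rcases hub with h | h
        · intro heq
          have : u ∈ Pt D r₁ x := heq.symm ▸ hu
          exact this.1 h
        · intro heq
          have : v ∈ Pt D r₁ x := heq.symm ▸ hv
          exact this.1 h
      have hstrict : (Pt D r₁ x).ncard < (Pt D r r₁).ncard :=
        Set.ncard_lt_ncard (hsub.ssubset_of_ne hne_sets) (Set.toFinite _)
      obtain ⟨s', hs'⟩ := D.bag_cover u'
      obtain ⟨w0⟩ := D.tree_connected.preconnected x s'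
      exact ihN (Pt D r₁ x).ncard (lt_of_lt_of_le hstrict hN)
        ((w0.toPath : D.tree.Walk x s').length) r₁ x u' v' s'
        (w0.toPath : D.tree.Walk x s') hadj1 hu'C hv'C hne' hnadj' hs' w0.toPath.2
        le_rfl le_rfl
    · push_neg at hub
      have hu2 : u ∈ Pt D r₁ x :=
        ((strong_fact hG hu'C hv'C hne' hnadj' u).resolve_left hub.1)
      have hv2 : v ∈ Pt D r₁ x :=
        ((strong_fact hG hu'C hv'C hne' hnadj' v).resolve_left hub.2)
      obtain ⟨q, hq, hqlen⟩ := sd_path_length (hu2.2 s_u hbag) p hp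
      have hL' : q.length < L := by omega
      exact ihL q.length hL' r₁ x u v s_u q hadj1 hu2 hv2 hne hnadj hbag hq
        (le_trans (Set.ncard_le_ncard hsub (Set.toFinite _)) hN) le_rfl

lemma cover_main [Finite V] {D : TreeDecomp G} (hG : NoTriple G) : CoverGoal D := by
  classical
  by_cases h : ∃ r, ∀ a, G.IsClique (Pt D r a)
  · obtain ⟨r, hr⟩ := h
    exact good_node hG hr
  push_neg at h
  have : Nonempty D.ι := D.tree_connected.nonempty
  obtain ⟨r₀⟩ := this
  obtain ⟨r₁, hr₁⟩ := h r₀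
  obtain ⟨u, hu, v, hv, hne, hnadj⟩ := nonclique_pair hr₁
  have hadj : D.tree.Adj r₀ r₁ := by
    obtain ⟨s, hs⟩ := D.bag_cover u
    exact (hu.2 s hs).1
  obtain ⟨s_u, hs_u⟩ := D.bag_cover u
  obtain ⟨w0⟩ := D.tree_connected.preconnected r₁ s_u
  exact descent hG (Pt D r₀ r₁).ncard ((w0.toPath : D.tree.Walk r₁ s_u).length)
    r₀ r₁ u v s_u (w0.toPath : D.tree.Walk r₁ s_u) hadj hu hv hne hnadj hs_u
    w0.toPath.2 le_rfl le_rfl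

/-! #### Clique cover plumbing -/

/-- Disjointify a list of sets. -/
def djList {α : Type*} : List (Set α) → List (Set α)
  | [] => []
  | C :: L => C :: (djList L).map (fun D => D \ C)

lemma djList_length {α : Type*} (l : List (Set α)) : (djList l).length = l.length := by
  induction l with
  | nil => rfl
  | cons C L ih => simp [djList, ih]

lemma djList_cover {α : Type*} (l : List (Set α)) (v : α) (h : ∃ C ∈ l, v ∈ C) :
    ∃ C ∈ djList l, v ∈ C := by
  induction l with
  | nil => simpa using h
  | cons C L ih =>
      by_cases hvC : v ∈ C
      · exact ⟨C, by simp [djList], hvC⟩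
      · obtain ⟨C₀, hC₀, hv₀⟩ := h
        rcases List.mem_cons.mp hC₀ with h' | h'
        · exact absurd (h' ▸ hv₀) hvC
        · obtain ⟨E, hE, hvE⟩ := ih ⟨C₀, h', hv₀⟩
          exact ⟨E \ C, by simp [djList]; exact Or.inr ⟨E, hE, rfl⟩, hvE, hvC⟩

lemma djList_subset {α : Type*} (l : List (Set α)) :
    ∀ E ∈ djList l, ∃ C ∈ l, E ⊆ C := by
  induction l with
  | nil => simp [djList]
  | cons C L ih =>
      intro E hE
      rcases List.mem_cons.mp hE with h' | h'
      · exact ⟨C, by simp, h' ▸ le_rfl⟩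
      · obtain ⟨E₀, hE₀, rfl⟩ := List.mem_map.mp h'
        obtain ⟨C₀, hC₀, hsub⟩ := ih E₀ hE₀
        exact ⟨C₀, by simp [hC₀], (Set.diff_subset).trans hsub⟩

lemma djList_pairwise {α : Type*} (l : List (Set α)) :
    (djList l).Pairwise (fun A B => Disjoint A B) := by
  induction l with
  | nil => simp [djList]
  | cons C L ih =>
      rw [djList, List.pairwise_cons]
      constructor
      · intro B hB
        obtain ⟨E₀, hE₀, rfl⟩ := List.mem_map.mp hB
        exact disjoint_sdiff_self_right
      · exact List.Pairwise.map _ (fun A B h => h.mono Set.diff_subset Set.diff_subset) ih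

lemma pairwise_disjoint_mem_eq {α : Type*} {l : List (Set α)}
    (h : l.Pairwise (fun A B => Disjoint A B)) {A B : Set α} {v : α}
    (hA : A ∈ l) (hB : B ∈ l) (hvA : v ∈ A) (hvB : v ∈ B) : A = B := by
  by_contra hne
  have hall : Disjoint A B := by
    letI : Std.Symm (fun A B : Set α => Disjoint A B) := ⟨fun A B (h : Disjoint A B) => h.symm⟩
    exact List.Pairwise.forall h hA hB hne
  exact (Set.disjoint_left.mp hall) hvA hvB

lemma exists_partition_of_list {α : Type*} (H : SimpleGraph α) (l : List (Set α))
    (hcl : ∀ C ∈ l, H.IsClique C) (hcov : ∀ v, ∃ C ∈ l, v ∈ C) :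
    ∃ F : Finset (Set α), F.card ≤ l.length ∧ (∀ C ∈ F, H.IsClique C) ∧
      ∀ v : α, ∃! C : Set α, C ∈ F ∧ v ∈ C := by
  classical
  refine ⟨(djList l).toFinset.filter (fun C => C ≠ ∅), ?_, ?_, ?_⟩
  · calc ((djList l).toFinset.filter (fun C => C ≠ ∅)).card
        ≤ (djList l).toFinset.card := Finset.card_filter_le _ _
      _ ≤ (djList l).length := (djList l).toFinset_card_le
      _ = l.length := djList_length l
  · intro C hC
    obtain ⟨hC1, -⟩ := Finset.mem_filter.mp hC
    obtain ⟨C₀, hC₀, hsub⟩ := djList_subset l C (List.mem_toFinset.mp hC1)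
    exact (hcl C₀ hC₀).subset hsub
  · intro v
    obtain ⟨C, hC, hvC⟩ := djList_cover l v (hcov v)
    refine ⟨C, ⟨Finset.mem_filter.mpr ⟨List.mem_toFinset.mpr hC, ?_⟩, hvC⟩, ?_⟩
    · exact fun h => (h ▸ hvC : v ∈ (∅ : Set α))
    · rintro C' ⟨hC', hvC'⟩
      obtain ⟨hC'1, -⟩ := Finset.mem_filter.mp hC'
      exact pairwise_disjoint_mem_eq (djList_pairwise l)
        (List.mem_toFinset.mp hC'1) hC hvC' hvC

lemma exists_ccn_partition {α : Type*} [Finite α] (H : SimpleGraph α) :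
    ∃ F : Finset (Set α), F.card = cliqueCoverNum H ∧ (∀ C ∈ F, H.IsClique C) ∧
      ∀ v : α, ∃! C : Set α, C ∈ F ∧ v ∈ C := by
  classical
  have : Fintype α := Fintype.ofFinite α
  have hne : {n | ∃ F : Finset (Set α), F.card = n ∧ (∀ C ∈ F, H.IsClique C) ∧
      ∀ v : α, ∃! C : Set α, C ∈ F ∧ v ∈ C}.Nonempty := by
    refine ⟨(Finset.univ.image fun w : α => ({w} : Set α)).card,
      Finset.univ.image fun w : α => ({w} : Set α), rfl, ?_, ?_⟩
    · intro C hC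
      obtain ⟨w, -, rfl⟩ := Finset.mem_image.mp hC
      exact (SimpleGraph.isClique_iff _).mpr (Set.pairwise_singleton _ _)
    · intro v
      refine ⟨{v}, ⟨Finset.mem_image.mpr ⟨v, Finset.mem_univ v, rfl⟩, rfl⟩, ?_⟩
      rintro C' ⟨hC', hvC'⟩
      obtain ⟨w, -, rfl⟩ := Finset.mem_image.mp hC'
      have : v = w := hvC'
      rw [this]
  have hmem := Nat.sInf_mem hne
  obtain ⟨F, hF1, hF2, hF3⟩ := hmem
  exact ⟨F, hF1, hF2, hF3⟩

lemma list_of_bag [Finite V] {G : SimpleGraph V} {B : Set V} {k : ℕ}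
    (hk : cliqueCoverNum (G.induce B) ≤ k) :
    ∃ l : List (Set V), l.length ≤ k ∧ (∀ C ∈ l, G.IsClique C) ∧
      ∀ v ∈ B, ∃ C ∈ l, v ∈ C := by
  classical
  obtain ⟨F, hFc, hFcl, hFp⟩ := exists_ccn_partition (G.induce B)
  refine ⟨F.toList.map (fun C => Subtype.val '' C), ?_, ?_, ?_⟩
  · rw [List.length_map, Finset.length_toList, hFc]; exact hk
  · intro C hC
    obtain ⟨C₀, hC₀, rfl⟩ := List.mem_map.mp hC
    intro x hx y hy hxy
    obtain ⟨a, ha, rfl⟩ := hx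
    obtain ⟨b, hb, rfl⟩ := hy
    have hab : a ≠ b := fun h => hxy (congrArg _ h)
    exact hFcl C₀ (Finset.mem_toList.mp hC₀) ha hb hab
  · intro v hv
    obtain ⟨C₀, ⟨hC₀, hvC₀⟩, -⟩ := hFp ⟨v, hv⟩
    exact ⟨Subtype.val '' C₀,
      List.mem_map.mpr ⟨C₀, Finset.mem_toList.mpr hC₀, rfl⟩, ⟨v, hv⟩, hvC₀, rfl⟩

/-! #### The complement of the shift graph -/

/-- Shift-graph adjacency on pairs. -/
def shAdj (n : ℕ) (a b : Fin n × Fin n) : Prop :=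
  a.1 < a.2 ∧ b.1 < b.2 ∧ (a.2 = b.1 ∨ b.2 = a.1)

/-- The complement of the shift graph (with junk vertices made universal). -/
def shiftCompl (n : ℕ) : SimpleGraph (Fin (n * n)) where
  Adj x y := x ≠ y ∧ ¬ shAdj n (finProdFinEquiv.symm x) (finProdFinEquiv.symm y)
  symm := ⟨by
    rintro x y ⟨h1, h2⟩
    refine ⟨h1.symm, fun h => h2 ?_⟩
    obtain ⟨a, b, c⟩ := h
    exact ⟨b, a, c.symm⟩⟩
  loopless := ⟨fun x h => h.1 rfl⟩

lemma shiftCompl_adj {n : ℕ} {x y : Fin (n * n)} :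
    (shiftCompl n).Adj x y ↔
      x ≠ y ∧ ¬ shAdj n (finProdFinEquiv.symm x) (finProdFinEquiv.symm y) := Iff.rfl

lemma shiftCompl_noTriple (n : ℕ) : NoTriple (shiftCompl n) := by
  intro u v w h1 h2 h3 n1 n2 n3
  have s1 : shAdj n (finProdFinEquiv.symm u) (finProdFinEquiv.symm v) := by
    by_contra h; exact n1 ⟨h1, h⟩
  have s2 : shAdj n (finProdFinEquiv.symm u) (finProdFinEquiv.symm w) := by
    by_contra h; exact n2 ⟨h2, h⟩
  have s3 : shAdj n (finProdFinEquiv.symm v) (finProdFinEquiv.symm w) := by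
    by_contra h; exact n3 ⟨h3, h⟩
  set a := finProdFinEquiv.symm u
  set b := finProdFinEquiv.symm v
  set c := finProdFinEquiv.symm w
  obtain ⟨la, lb, o1⟩ := s1
  obtain ⟨-, lc, o2⟩ := s2
  obtain ⟨-, -, o3⟩ := s3
  have la' : (a.1 : ℕ) < (a.2 : ℕ) := la
  have lb' : (b.1 : ℕ) < (b.2 : ℕ) := lb
  have lc' : (c.1 : ℕ) < (c.2 : ℕ) := lc
  have o1' : (a.2 : ℕ) = (b.1 : ℕ) ∨ (b.2 : ℕ) = (a.1 : ℕ) := by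
    rcases o1 with h | h
    exacts [Or.inl (congrArg Fin.val h), Or.inr (congrArg Fin.val h)]
  have o2' : (a.2 : ℕ) = (c.1 : ℕ) ∨ (c.2 : ℕ) = (a.1 : ℕ) := by
    rcases o2 with h | h
    exacts [Or.inl (congrArg Fin.val h), Or.inr (congrArg Fin.val h)]
  have o3' : (b.2 : ℕ) = (c.1 : ℕ) ∨ (c.2 : ℕ) = (b.1 : ℕ) := by
    rcases o3 with h | h
    exacts [Or.inl (congrArg Fin.val h), Or.inr (congrArg Fin.val h)]
  omega

/-- The pigeonhole lower bound for clique covers of the complement of the shift graph. -/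
lemma shift_lb (c : ℕ) (F : Finset (Set (Fin (2 ^ c * 2 ^ c))))
    (hcl : ∀ C ∈ F, (shiftCompl (2 ^ c)).IsClique C)
    (hpart : ∀ v, ∃! C : Set (Fin (2 ^ c * 2 ^ c)), C ∈ F ∧ v ∈ C) :
    c ≤ F.card := by
  classical
  let φ : Fin (2 ^ c) → Finset (Set (Fin (2 ^ c * 2 ^ c))) := fun i =>
    F.filter (fun P => ∃ j : Fin (2 ^ c), i < j ∧ finProdFinEquiv (i, j) ∈ P)
  have key : ∀ i j : Fin (2 ^ c), i < j → φ i ≠ φ j := by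
    intro i j hij heq
    obtain ⟨P, ⟨hPF, hPv⟩, -⟩ := hpart (finProdFinEquiv (i, j))
    have hPi : P ∈ φ i := Finset.mem_filter.mpr ⟨hPF, j, hij, hPv⟩
    rw [heq] at hPi
    obtain ⟨-, k, hjk, hk⟩ := Finset.mem_filter.mp hPi
    have hne : finProdFinEquiv (i, j) ≠ finProdFinEquiv (j, k) := by
      intro h
      have := finProdFinEquiv.injective h
      exact hij.ne (congrArg Prod.fst this)
    have hadj := hcl P hPF hPv hk hne
    apply hadj.2
    rw [Equiv.symm_apply_apply, Equiv.symm_apply_apply]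
    exact ⟨hij, hjk, Or.inl rfl⟩
  have hinj : Function.Injective φ := by
    intro i j heq
    rcases lt_trichotomy i j with h | h | h
    · exact absurd heq (key i j h)
    · exact h
    · exact absurd heq.symm (key j i h)
  let φ' : Fin (2 ^ c) → {S // S ∈ F.powerset} := fun i =>
    ⟨φ i, Finset.mem_powerset.mpr (Finset.filter_subset _ _)⟩
  have hinj' : Function.Injective φ' := fun i j h => hinj (congrArg Subtype.val h)
  have hcard := Fintype.card_le_of_injective φ' hinj'
  rw [Fintype.card_fin, Fintype.card_coe, Finset.card_powerset] at hcard
  exact (Nat.pow_le_pow_iff_right (by norm_num)).mp hcard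

/-! #### The trivial tree decomposition and small tree independence number -/

/-- The one-bag tree decomposition. -/
def trivDecomp (G : SimpleGraph V) : TreeDecomp G where
  ι := PUnit
  tree := ⊥
  tree_acyclic := by
    intro v p hp
    cases p with
    | nil => exact hp.ne_nil rfl
    | cons h q => exact h.elim
  tree_connected := by
    have : Nonempty PUnit.{1} := ⟨PUnit.unit⟩
    exact ⟨fun a b => by cases a; cases b; exact Reachable.refl _⟩
  bag := fun _ => Set.univ
  bag_cover := fun v => ⟨PUnit.unit, Set.mem_univ v⟩
  bag_edge := fun u v _ => ⟨PUnit.unit, Set.mem_univ u, Set.mem_univ v⟩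
  bag_subtree := fun v => by
    have : Nonempty ↑{t : PUnit.{1} | v ∈ (Set.univ : Set V)} := ⟨⟨PUnit.unit, Set.mem_univ v⟩⟩
    exact ⟨fun a b => by rw [Subsingleton.elim a b]⟩

lemma indepNum_le_two {α : Type*} (H : SimpleGraph α) (hH : NoTriple H) :
    indepNum H ≤ 2 := by
  apply csSup_le
  · exact ⟨0, ∅, by simp, by simp⟩
  rintro n ⟨S, hS, rfl⟩
  by_contra hgt
  push_neg at hgt
  have hfin : S.Finite := by
    by_contra hinf
    rw [Set.Infinite.ncard hinf] at hgt
    omega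
  obtain ⟨a, ha, b, hb, hab⟩ : ∃ a ∈ S, ∃ b ∈ S, a ≠ b := by
    rcases (Set.one_lt_ncard_iff hfin).mp (by omega) with ⟨a, b, ha, hb, hne⟩
    exact ⟨a, ha, b, hb, hne⟩
  obtain ⟨c, hc, hca, hcb⟩ : ∃ c ∈ S, c ≠ a ∧ c ≠ b := by
    by_contra hcon
    push_neg at hcon
    have hsub : S ⊆ {a, b} := by
      intro x hx
      by_cases hxa : x = a
      · exact Set.mem_insert_iff.mpr (Or.inl hxa)
      · exact Set.mem_insert_iff.mpr (Or.inr (hcon x hx hxa))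
    have : S.ncard ≤ 2 := le_trans
      (Set.ncard_le_ncard hsub ((Set.finite_singleton b).insert a))
      (le_trans (Set.ncard_insert_le a {b}) (by simp [Set.ncard_singleton]))
    omega
  exact hH a b c hab (Ne.symm hca) (Ne.symm hcb)
    (hS ha hb hab) (hS ha hc (Ne.symm hca)) (hS hb hc (Ne.symm hcb))

lemma noTriple_induce {α : Type*} {H : SimpleGraph α} (hH : NoTriple H) (B : Set α) :
    NoTriple (H.induce B) := by
  intro u v w h1 h2 h3 n1 n2 n3
  exact hH u.1 v.1 w.1 (fun h => h1 (Subtype.ext h)) (fun h => h2 (Subtype.ext h))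
    (fun h => h3 (Subtype.ext h)) n1 n2 n3

end Statement5Aux

theorem statement5 (C : ℕ) (hC : 0 < C) :
    ∃ (n : ℕ) (G : SimpleGraph (Fin n)),
      treeIndepNum G ≤ 2 ∧ C ≤ treeCliqueCoverNum G := by
  classical
  set c : ℕ := 2 * C + 2 with hc
  set n : ℕ := 2 ^ c with hn
  refine ⟨n * n, shiftCompl n, ?_, ?_⟩
  · apply Nat.sInf_le
    exact ⟨trivDecomp _, fun t =>
      indepNum_le_two _ (noTriple_induce (shiftCompl_noTriple n) _)⟩
  · have hne : {k | ∃ D : TreeDecomp (shiftCompl n),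
        ∀ t, cliqueCoverNum ((shiftCompl n).induce (D.bag t)) ≤ k}.Nonempty :=
      ⟨cliqueCoverNum ((shiftCompl n).induce Set.univ), trivDecomp _, fun t => le_rfl⟩
    apply le_csInf hne
    rintro k ⟨D, hD⟩
    obtain ⟨t, t', K₁, K₂, hK₁, hK₂, hcov⟩ := cover_main (D := D) (shiftCompl_noTriple n)
    obtain ⟨l₁, hl₁len, hl₁cl, hl₁cov⟩ := list_of_bag (hD t)
    obtain ⟨l₂, hl₂len, hl₂cl, hl₂cov⟩ := list_of_bag (hD t')
    set l : List (Set (Fin (n * n))) := l₁ ++ l₂ ++ [K₁, K₂] with hl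
    have hcl : ∀ C' ∈ l, (shiftCompl n).IsClique C' := by
      intro C' hC'
      rw [hl] at hC'
      rcases List.mem_append.mp hC' with h | h
      · rcases List.mem_append.mp h with h' | h'
        · exact hl₁cl C' h'
        · exact hl₂cl C' h'
      · rcases List.mem_cons.mp h with h' | h'
        · exact h' ▸ hK₁
        · rcases List.mem_cons.mp h' with h'' | h''
          · exact h'' ▸ hK₂
          · simp at h''
    have hcov' : ∀ v, ∃ C' ∈ l, v ∈ C' := by
      intro v
      rcases hcov v with h | h | h | h
      · obtain ⟨C', hC', hv⟩ := hl₁cov v h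
        exact ⟨C', by rw [hl]; simp [hC'], hv⟩
      · obtain ⟨C', hC', hv⟩ := hl₂cov v h
        exact ⟨C', by rw [hl]; simp [hC'], hv⟩
      · exact ⟨K₁, by rw [hl]; simp, h⟩
      · exact ⟨K₂, by rw [hl]; simp, h⟩
    obtain ⟨F, hFcard, hFcl, hFpart⟩ := exists_partition_of_list _ l hcl hcov'
    have hlb : c ≤ F.card := shift_lb c F hFcl hFpart
    have hlen : l.length ≤ k + k + 2 := by
      rw [hl]
      simp only [List.length_append, List.length_cons, List.length_nil]
      omega
    omega

end Paper
end

section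
/- Let G be a finite simple (C4, diamond)-free graph with no clique cutset, let v1, v2 ∈ V(G), and let S1 = (A1, C1, B1) and S2 = (A2, C2, B2) be separations of G such that for i = 1, 2: v_i ∈ C_i ⊆ N[v_i], B_i is connected, and N(B_i) = C_i \ {v_i}. If v2 ∈ A1 and B2 ∩ (B1 ∪ (C1 \ {v1})) ≠ ∅, then B1 ∪ C1 ⊆ B2 ∪ C2 (that is, S1 is a shield for S2). -/
/-!
Since `v₂ ∈ A₁` and `C₂ ⊆ N[v₂]`, the set `B₁` misses `C₂`; being connected and meeting `B₂`,
it lies inside `B₂`, so `N(B₁) = C₁ \ {v₁}` lies in `B₂ ∪ C₂`. If `v₁` were in `A₂`, every vertex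
of `C₁ \ {v₁}` would be a common neighbour of `v₁` and `v₂`. In a (C4, diamond)-free graph the
common neighbours of two vertices form a clique, so `C₁ \ {v₁}` would be a clique cutset
separating `B₁` from `v₂`.
-/


open SimpleGraph

namespace Paper

variable {V : Type*}

variable {G : SimpleGraph V}

lemma containsInduced_of_adj_iff {W : Type*} {H : SimpleGraph W} (f : W → V)
    (hf : Function.Injective f) (hadj : ∀ i j, G.Adj (f i) (f j) ↔ H.Adj i j) :
    ContainsInduced G H :=
  let e : H ↪g G := ⟨⟨f, hf⟩, hadj _ _⟩
  ⟨Set.range e, ⟨e.isoInduceRange.symm⟩⟩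

lemma injective_four {a b c d : V} (hab : a ≠ b) (hac : a ≠ c) (had : a ≠ d)
    (hbc : b ≠ c) (hbd : b ≠ d) (hcd : c ≠ d) : Function.Injective ![a, b, c, d] := by
  intro i j h
  fin_cases i <;> fin_cases j <;> simp_all [eq_comm]

/-- Two non-adjacent common neighbours of `u` and `v` would span a diamond or a C4 with them,
according as `u` and `v` are adjacent or not. -/
lemma isClique_commonNeighbors (hc4 : Free G (cycleGraph 4)) (hd : Free G diamond) {u v : V}
    (huv : u ≠ v) : G.IsClique (G.commonNeighbors u v) := by
  rintro x ⟨hux : G.Adj u x, hvx : G.Adj v x⟩ y ⟨huy : G.Adj u y, hvy : G.Adj v y⟩ hxy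
  by_contra hnxy
  by_cases huv' : G.Adj u v
  · refine hd (containsInduced_of_adj_iff ![x, y, u, v]
      (injective_four hxy hux.ne.symm hvx.ne.symm huy.ne.symm hvy.ne.symm huv) fun i j => ?_)
    fin_cases i <;> fin_cases j <;> simp [diamond, G.adj_comm, *]
  · refine hc4 (containsInduced_of_adj_iff ![u, x, v, y]
      (injective_four hux.ne huv huy.ne hvx.ne.symm hxy hvy.ne) fun i j => ?_)
    fin_cases i <;> fin_cases j <;> simp [cycleGraph_adj, G.adj_comm, *] <;> decide

lemma subset_of_preconnected_induce {S T : Set V} (hS : (G.induce S).Preconnected)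
    (hT : ∀ ⦃u w⦄, u ∈ S → w ∈ S → G.Adj u w → u ∈ T → w ∈ T) (hST : (S ∩ T).Nonempty) :
    S ⊆ T := by
  obtain ⟨a, haS, haT⟩ := hST
  suffices h : ∀ {x y : S}, (G.induce S).Walk x y → x.1 ∈ T → y.1 ∈ T from
    fun b hb => h (hS ⟨a, haS⟩ ⟨b, hb⟩).some haT
  intro x y p
  induction p with
  | nil => exact id
  | cons h _ ih => exact fun hx => ih (hT (Subtype.prop _) (Subtype.prop _) h hx)

lemma hasCliqueCutset_of_isClique_setNbhd {B : Set V} (hK : G.IsClique (setNbhd G B))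
    (hB : B.Nonempty) {v : V} (hvB : v ∉ B) (hvN : v ∉ setNbhd G B) : HasCliqueCutset G := by
  refine ⟨_, hK, fun hpre => hvB ?_⟩
  obtain ⟨b, hb⟩ := hB
  have hcompl : (setNbhd G B)ᶜ ⊆ B :=
    subset_of_preconnected_induce hpre
      (fun u w _ hw huw hu => by_contra fun hwB => hw ⟨hwB, u, hu, huw.symm⟩)
      ⟨b, fun h => h.1 hb, hb⟩
  exact hcompl hvN

namespace IsSeparation

variable {A C B X : Set V}

lemma not_adj (hS : IsSeparation G A C B) {a b : V} (ha : a ∈ A) (hb : b ∈ B) : ¬ G.Adj a b :=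
  hS.2.2.2.2 a ha b hb

lemma mem_left_or_mem_union (hS : IsSeparation G A C B) (x : V) : x ∈ A ∨ x ∈ B ∪ C := by
  have hx : x ∈ A ∪ C ∪ B := hS.1 ▸ Set.mem_univ x
  rcases hx with (hA | hC) | hB
  exacts [Or.inl hA, Or.inr (Or.inr hC), Or.inr (Or.inl hB)]

lemma mem_union_of_adj (hS : IsSeparation G A C B) {x b : V} (hb : b ∈ B) (hxb : G.Adj x b) :
    x ∈ B ∪ C :=
  (hS.mem_left_or_mem_union x).resolve_left fun hx => hS.not_adj hx hb hxb

lemma disjoint_closedNbhd (hS : IsSeparation G A C B) {v : V} (hv : v ∈ A) :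
    Disjoint B (closedNbhd G v) := by
  refine Set.disjoint_left.2 fun b hb hbv => ?_
  rcases hbv with rfl | hvb
  exacts [Set.disjoint_left.1 hS.2.2.1 hv hb, hS.not_adj hv hb hvb]

lemma setNbhd_subset (hS : IsSeparation G A C B) (hX : X ⊆ B) : setNbhd G X ⊆ B ∪ C :=
  fun _ ⟨_, _, hu, hxu⟩ => hS.mem_union_of_adj (hX hu) hxu

lemma inter_nonempty (hS : IsSeparation G A C B) (hXC : Disjoint X C)
    (h : (B ∩ (X ∪ setNbhd G X)).Nonempty) : (X ∩ B).Nonempty := by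
  obtain ⟨x, hxB, hxX | ⟨-, u, hu, hxu⟩⟩ := h
  · exact ⟨x, hxX, hxB⟩
  · refine ⟨u, hu, (hS.mem_union_of_adj hxB hxu.symm).resolve_right ?_⟩
    exact Set.disjoint_left.1 hXC hu

lemma subset_of_preconnected (hS : IsSeparation G A C B) (hX : (G.induce X).Preconnected)
    (hXC : Disjoint X C) (hXB : (X ∩ B).Nonempty) : X ⊆ B :=
  subset_of_preconnected_induce hX
    (fun _ _ _ hw huw hu => (hS.mem_union_of_adj hu huw.symm).resolve_right
      (Set.disjoint_left.1 hXC hw)) hXB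

end IsSeparation

theorem statement12_general {V : Type} (G : SimpleGraph V)
    (hc4 : Free G (cycleGraph 4)) (hd : Free G diamond) (hnc : ¬ HasCliqueCutset G)
    (v₁ v₂ : V) (A₁ C₁ B₁ A₂ C₂ B₂ : Set V)
    (hS₁ : IsSeparation G A₁ C₁ B₁) (hS₂ : IsSeparation G A₂ C₂ B₂)
    (hv₁ : v₁ ∈ C₁) (hC₁ : C₁ ⊆ closedNbhd G v₁)
    (hB₁ : (G.induce B₁).Connected) (hN₁ : setNbhd G B₁ = C₁ \ {v₁})
    (hC₂ : C₂ ⊆ closedNbhd G v₂)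
    (hv₂A₁ : v₂ ∈ A₁) (hmeet : (B₂ ∩ (B₁ ∪ (C₁ \ {v₁}))).Nonempty) :
    B₁ ∪ C₁ ⊆ B₂ ∪ C₂ := by
  have hv₂C₁ : v₂ ∉ C₁ := Set.disjoint_left.1 hS₁.2.1 hv₂A₁
  have hB₁C₂ : Disjoint B₁ C₂ := (hS₁.disjoint_closedNbhd hv₂A₁).mono_right hC₂
  have hB₁B₂ : B₁ ⊆ B₂ :=
    hS₂.subset_of_preconnected hB₁.preconnected hB₁C₂ (hS₂.inter_nonempty hB₁C₂ (hN₁ ▸ hmeet))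
  have hN : C₁ \ {v₁} ⊆ B₂ ∪ C₂ := hN₁ ▸ hS₂.setNbhd_subset hB₁B₂
  have hv₁B₂C₂ : v₁ ∈ B₂ ∪ C₂ := by
    refine (hS₂.mem_left_or_mem_union v₁).resolve_left fun hv₁A₂ => hnc ?_
    have hcommon : C₁ \ {v₁} ⊆ G.commonNeighbors v₁ v₂ := by
      rintro c ⟨hc, hcv₁ : c ≠ v₁⟩
      have hv₁c : G.Adj v₁ c := Set.mem_of_mem_insert_of_ne (hC₁ hc) hcv₁
      have hcC₂ : c ∈ C₂ := (hN ⟨hc, hcv₁⟩).resolve_left (hS₂.not_adj hv₁A₂ · hv₁c)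
      exact ⟨hv₁c, Set.mem_of_mem_insert_of_ne (hC₂ hcC₂) (ne_of_mem_of_not_mem hc hv₂C₁)⟩
    have hclique : G.IsClique (C₁ \ {v₁}) :=
      (isClique_commonNeighbors hc4 hd (ne_of_mem_of_not_mem hv₁ hv₂C₁)).subset hcommon
    exact hasCliqueCutset_of_isClique_setNbhd (hN₁ ▸ hclique)
      (Set.nonempty_coe_sort.1 hB₁.nonempty) (Set.disjoint_left.1 hS₁.2.2.1 hv₂A₁)
      (hN₁ ▸ fun h => hv₂C₁ h.1)
  rintro z (hz | hz)
  · exact Or.inl (hB₁B₂ hz)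
  · obtain rfl | hzv := eq_or_ne z v₁
    exacts [hv₁B₂C₂, hN ⟨hz, hzv⟩]

theorem statement12 {V : Type} [Fintype V] (G : SimpleGraph V)
    (hc4 : Free G (cycleGraph 4)) (hd : Free G diamond) (hnc : ¬ HasCliqueCutset G)
    (v₁ v₂ : V) (A₁ C₁ B₁ A₂ C₂ B₂ : Set V)
    (hS₁ : IsSeparation G A₁ C₁ B₁) (hS₂ : IsSeparation G A₂ C₂ B₂)
    (hv₁ : v₁ ∈ C₁) (hC₁ : C₁ ⊆ closedNbhd G v₁)
    (hB₁ : (G.induce B₁).Connected) (hN₁ : setNbhd G B₁ = C₁ \ {v₁})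
    (hv₂ : v₂ ∈ C₂) (hC₂ : C₂ ⊆ closedNbhd G v₂)
    (hB₂ : (G.induce B₂).Connected) (hN₂ : setNbhd G B₂ = C₂ \ {v₂})
    (hv₂A₁ : v₂ ∈ A₁) (hmeet : (B₂ ∩ (B₁ ∪ (C₁ \ {v₁}))).Nonempty) :
    B₁ ∪ C₁ ⊆ B₂ ∪ C₂ :=
  statement12_general G hc4 hd hnc v₁ v₂ A₁ C₁ B₁ A₂ C₂ B₂ hS₁ hS₂ hv₁ hC₁ hB₁ hN₁ hC₂ hv₂A₁ hmeet

end Paper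
end
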